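/- Let Q_n be defined by Q_{-1}=0, Q_0=1, Q_{n+1}=(x−c_n)Q_n − λ_n Q_{n-1} over the polynomial ring in x with coefficients in the commutative ring ℚ[c_0,c_1,…,λ_1,λ_2,…]. Let h_{n,k} be defined by the recursion h_{n,k} = λ_k h_{n-1,k-1} + c_k h_{n-1,k} + h_{n-1,k+1} with h_{0,0}=1 and h_{n,k}=0 for n<k. Then the matrix (h_{n,k}/(λ_1⋯λ_k)) is the inverse of the coefficient matrix (a_{n,k}) of the polynomials Q_n = ∑_k a_{n,k} x^k, i.e., ∑_{k=s}^n a_{n,k}·h_{k,s} = δ_{n,s}·λ_1λ_2⋯λ_n. -/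

import Mathlib

/-- The ring of commuting indeterminates `c_0, c_1, …` and `λ_1, λ_2, …`. -/
noncomputable abbrev CoefRing : Type := MvPolynomial (ℕ ⊕ ℕ) ℚ

/-- The indeterminate `c_i`. -/
noncomputable def cVar (i : ℕ) : CoefRing := MvPolynomial.X (Sum.inl i)

/-- The indeterminate `λ_i`. -/
noncomputable def lVar (i : ℕ) : CoefRing := MvPolynomial.X (Sum.inr i)

/-- The monic orthogonal polynomials of the three-term recursion
`Q_{n+1} = (x - c_n) Q_n - λ_n Q_{n-1}`, `Q_{-1} = 0`, `Q_0 = 1`. -/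
noncomputable def genQ : ℕ → Polynomial CoefRing
  | 0 => 1
  | 1 => Polynomial.X - Polynomial.C (cVar 0)
  | n + 2 => (Polynomial.X - Polynomial.C (cVar (n + 1))) * genQ (n + 1)
      - Polynomial.C (lVar (n + 1)) * genQ n

open Polynomial in
theorem genQ_deg : ∀ n, (genQ n).Monic ∧ (genQ n).natDegree = n
  | 0 => ⟨monic_one, natDegree_one⟩
  | 1 => ⟨monic_X_sub_C _, natDegree_X_sub_C _⟩
  | n+2 => by
    obtain ⟨m1, d1⟩ := genQ_deg (n+1)
    obtain ⟨m0, d0⟩ := genQ_deg n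
    have hp : ((X - C (cVar (n+1))) * genQ (n+1)).Monic := (monic_X_sub_C _).mul m1
    have hpd : ((X - C (cVar (n+1))) * genQ (n+1)).natDegree = n + 2 := by
      rw [(monic_X_sub_C _).natDegree_mul m1, natDegree_X_sub_C, d1]; omega
    have hqd : (C (lVar (n+1)) * genQ n).natDegree < n + 2 := by
      calc (C (lVar (n+1)) * genQ n).natDegree ≤ 0 + (genQ n).natDegree :=
        le_trans (natDegree_mul_le) (by simp)
      _ < n + 2 := by omega
    have hd : (genQ (n+2)).natDegree = n + 2 := by
      show ((X - C (cVar (n+1))) * genQ (n+1) - C (lVar (n+1)) * genQ n).natDegree = n + 2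
      rw [natDegree_sub_eq_left_of_natDegree_lt (by omega), hpd]
    refine ⟨?_, hd⟩
    have hc : (genQ (n+2)).coeff (n+2) = 1 := by
      have e : genQ (n+2) = (X - C (cVar (n+1))) * genQ (n+1) - C (lVar (n+1)) * genQ n := rfl
      rw [e]
      rw [coeff_sub, coeff_eq_zero_of_natDegree_lt hqd, sub_zero]
      have := hp.coeff_natDegree
      rwa [hpd] at this
    exact monic_of_natDegree_le_of_coeff_eq_one (n+2) (le_of_eq hd) hc

open Polynomial in
theorem genQ_coeff_zero (n k : ℕ) (hk : n < k) : (genQ n).coeff k = 0 :=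
  coeff_eq_zero_of_natDegree_lt (by rw [(genQ_deg n).2]; exact hk)

open Polynomial Finset in
theorem main_aux (h : ℕ → ℕ → CoefRing)
    (h00 : h 0 0 = 1)
    (hzero : ∀ n k, n < k → h n k = 0)
    (hrec0 : ∀ n, h (n + 1) 0 = cVar 0 * h n 0 + h n 1)
    (hrec : ∀ n k, h (n + 1) (k + 1) =
      lVar (k + 1) * h n k + cVar (k + 1) * h n (k + 1) + h n (k + 2)) :
    ∀ n s : ℕ,
      (∑ k ∈ Finset.range (n + 1), (genQ n).coeff k * h k s) =
        if n = s then ∏ i ∈ Finset.range n, lVar (i + 1) else 0 := by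
  intro n
  induction n using Nat.strong_induction_on with
  | _ n ih =>
  match n, ih with
  | 0, _ =>
    intro s
    rcases s with _ | s
    · simp [genQ, h00]
    · simp [genQ, hzero 0 (s+1) (by omega)]
  | 1, _ =>
    intro s
    have e : genQ 1 = X - C (cVar 0) := rfl
    rw [Finset.sum_range_succ, Finset.sum_range_one, e]
    rcases s with _ | _ | s
    · rw [hrec0 0]
      simp [hzero 0 1 (by omega), h00]
    · rw [hrec 0 0]
      simp [hzero 0 1 (by omega), hzero 0 2 (by omega), h00]
    · rw [hzero 0 (s+2) (by omega), hzero 1 (s+2) (by omega)]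
      simp
  | (n+2), ih =>
    intro s
    have ih1 : ∀ s, ∑ k ∈ Finset.range (n+2), (genQ (n+1)).coeff k * h k s
        = if n+1 = s then ∏ i ∈ Finset.range (n+1), lVar (i+1) else 0 :=
      fun s => ih (n+1) (by omega) s
    have ih0 := ih n (by omega)
    have e : genQ (n+2) = X * genQ (n+1) - C (cVar (n+1)) * genQ (n+1)
        - C (lVar (n+1)) * genQ n := by
      have : genQ (n+2) = (X - C (cVar (n+1))) * genQ (n+1)
          - C (lVar (n+1)) * genQ n := rfl
      rw [this]; ring
    rw [e]
    simp only [coeff_sub, coeff_C_mul, sub_mul]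
    rw [Finset.sum_sub_distrib, Finset.sum_sub_distrib]
    have hB : ∑ k ∈ range (n+2+1), cVar (n+1) * (genQ (n+1)).coeff k * h k s
        = cVar (n+1) * (if n+1 = s then ∏ i ∈ range (n+1), lVar (i+1) else 0) := by
      rw [Finset.sum_range_succ, genQ_coeff_zero (n+1) (n+2) (by omega)]
      rw [← ih1 s, Finset.mul_sum]
      simp [mul_assoc]
    have hC : ∑ k ∈ range (n+2+1), lVar (n+1) * (genQ n).coeff k * h k s
        = lVar (n+1) * (if n = s then ∏ i ∈ range n, lVar (i+1) else 0) := by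
      rw [Finset.sum_range_succ, Finset.sum_range_succ,
        genQ_coeff_zero n (n+2) (by omega), genQ_coeff_zero n (n+1) (by omega)]
      rw [← ih0 s, Finset.mul_sum]
      simp [mul_assoc]
    have hA : ∑ k ∈ range (n+2+1), (X * genQ (n+1)).coeff k * h k s
        = ∑ j ∈ range (n+2), (genQ (n+1)).coeff j * h (j+1) s := by
      rw [Finset.sum_range_succ']
      simp [Polynomial.coeff_X_mul, Polynomial.mul_coeff_zero]
    rw [hA, hB, hC]
    have P2 : (∏ i ∈ range (n+2), lVar (i+1))
        = (∏ i ∈ range (n+1), lVar (i+1)) * lVar (n+2) := Finset.prod_range_succ _ _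
    have P1 : (∏ i ∈ range (n+1), lVar (i+1))
        = (∏ i ∈ range n, lVar (i+1)) * lVar (n+1) := Finset.prod_range_succ _ _
    rcases s with _ | t
    · -- s = 0
      have hA0 : ∑ j ∈ range (n+2), (genQ (n+1)).coeff j * h (j+1) 0
          = cVar 0 * (if n+1 = 0 then ∏ i ∈ range (n+1), lVar (i+1) else 0)
            + (if n+1 = 1 then ∏ i ∈ range (n+1), lVar (i+1) else 0) := by
        rw [Finset.sum_congr rfl (fun j _ => by
          rw [hrec0 j]; ring
          : ∀ j ∈ range (n+2), (genQ (n+1)).coeff j * h (j+1) 0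
            = cVar 0 * ((genQ (n+1)).coeff j * h j 0) + (genQ (n+1)).coeff j * h j 1),
          Finset.sum_add_distrib, ← Finset.mul_sum, ih1 0, ih1 1]
      rw [hA0, P2, P1]
      split_ifs <;> first
        | (exfalso; first | assumption | omega)
        | ring1
    · -- s = t+1
      have hA1 : ∑ j ∈ range (n+2), (genQ (n+1)).coeff j * h (j+1) (t+1)
          = lVar (t+1) * (if n+1 = t then ∏ i ∈ range (n+1), lVar (i+1) else 0)
            + cVar (t+1) * (if n+1 = t+1 then ∏ i ∈ range (n+1), lVar (i+1) else 0)
            + (if n+1 = t+2 then ∏ i ∈ range (n+1), lVar (i+1) else 0) := by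
        rw [Finset.sum_congr rfl (fun j _ => by
          rw [hrec j t]; ring
          : ∀ j ∈ range (n+2), (genQ (n+1)).coeff j * h (j+1) (t+1)
            = lVar (t+1) * ((genQ (n+1)).coeff j * h j t)
              + cVar (t+1) * ((genQ (n+1)).coeff j * h j (t+1))
              + (genQ (n+1)).coeff j * h j (t+2)),
          Finset.sum_add_distrib, Finset.sum_add_distrib,
          ← Finset.mul_sum, ← Finset.mul_sum, ih1 t, ih1 (t+1), ih1 (t+2)]
      rw [hA1, P2, P1]
      split_ifs <;> first
        | (exfalso; first | assumption | omega)
        | ring1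
        | (rw [show t+1 = n+2 by omega]; ring1)
        | (rw [show t+1 = n+1 by omega]; ring1)

/-- The weighted Motzkin-path counts `h_{n,k}` invert the coefficient matrix of
the `Q_n`'s:  `∑_k a_{n,k} h_{k,s} = δ_{n,s} λ_1 ⋯ λ_n`. -/
theorem coeff_matrix_inverse_of_moments
    (h : ℕ → ℕ → CoefRing)
    (h00 : h 0 0 = 1)
    (hzero : ∀ n k, n < k → h n k = 0)
    (hrec0 : ∀ n, h (n + 1) 0 = cVar 0 * h n 0 + h n 1)
    (hrec : ∀ n k, h (n + 1) (k + 1) =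
      lVar (k + 1) * h n k + cVar (k + 1) * h n (k + 1) + h n (k + 2)) :
    ∀ n s : ℕ,
      (∑ k ∈ Finset.range (n + 1), (genQ n).coeff k * h k s) =
        if n = s then ∏ i ∈ Finset.range n, lVar (i + 1) else 0 :=
  main_aux h h00 hzero hrec0 hrec
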